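/- arXiv:0704.1249 — 3 statements merged into one kernel-verified Lean document; each statement's English description precedes it below -/
import Mathlib

section
/- For each 1 ≤ i < n the sequence of R-modules 0 → S_i → S_{i+1} ⊕ S_{i−1} → S/(f_1⋯f_{i−1}f_{i+1}) → 0 is a short exact sequence, where the first map sends s to (f_{i+1}·s, −π(s)) (multiplication by f_{i+1} into S_{i+1} and minus the canonical projection onto S_{i−1}) and the second map sends (s,t) to π(s) + f_{i+1}·t (the canonical projection from S_{i+1} plus multiplication by f_{i+1} from S_{i−1}). -/
set_option synthInstance.maxHeartbeats 1000000
set_option maxHeartbeats 1000000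

/-- `S = k[[x,y]]`, the formal power series ring in two variables. -/
abbrev PSring (k : Type) [Field k] : Type := MvPowerSeries (Fin 2) k

/-- The maximal ideal `m = (x, y)` of `k[[x,y]]`. -/
noncomputable abbrev mxy (k : Type) [Field k] : Ideal (PSring k) :=
  Ideal.span {MvPowerSeries.X 0, MvPowerSeries.X 1}

/-- `R = S/(f₁ ⋯ f_n)`. -/
abbrev Rring (k : Type) [Field k] (n : ℕ) (f : ℕ → PSring k) : Type :=
  PSring k ⧸ Ideal.span {∏ j ∈ Finset.range n, f j}

/-- The canonical projection `S → R`. -/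
noncomputable abbrev toR (k : Type) [Field k] (n : ℕ) (f : ℕ → PSring k) :
    PSring k →+* Rring k n f :=
  Ideal.Quotient.mk (Ideal.span {∏ j ∈ Finset.range n, f j})

/-- For `a ∈ S`, the `R`-module `R/(ā)`, which is `S/(a)` when `f₁⋯f_n ∈ (a)`. -/
abbrev Qmod (k : Type) [Field k] (n : ℕ) (f : ℕ → PSring k) (a : PSring k) : Type :=
  Rring k n f ⧸ Ideal.span {toR k n f a}

/-- The class in `S/(a)` of an element `r : R`. -/
noncomputable abbrev qmk (k : Type) [Field k] (n : ℕ) (f : ℕ → PSring k)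
    (a : PSring k) (r : Rring k n f) : Qmod k n f a :=
  Ideal.Quotient.mk (Ideal.span {toR k n f a}) r

/-- `Sᵢ = S/(f₁ ⋯ fᵢ)` as an `R`-module (1-based index `i`;
in the 0-based function `f`, the mathematical `fᵢ` is `f (i-1)`). -/
abbrev Smod (k : Type) [Field k] (n : ℕ) (f : ℕ → PSring k) (i : ℕ) : Type :=
  Qmod k n f (∏ j ∈ Finset.range i, f j)

/-!
The sequence is `0 → A/(cq) → A/(cqg) ⊕ A/(c) → A/(cg) → 0` with `c = f₁⋯f_{i-1}`, `q = f_i`,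
`g = f_{i+1}`. Exactness in the middle holds over any commutative ring: if `s + g t = c g w`, then
`u = c w - t` is a preimage of `(s, t)`. Injectivity amounts to deducing `cq ∣ s` from
`cqg ∣ g s`; as `g` is a zero divisor in `R`, this is done by lifting to the domain `S`, which is
possible because `cqg` divides `f₁⋯f_n`.
-/

open Ideal

section QuotientMaps

variable {A : Type*} [CommRing A]

noncomputable def mulQ (g : A) {a b : A} (h : b ∣ g * a) :
    (A ⧸ span {a}) →ₗ[A] A ⧸ span {b} :=
  Submodule.liftQ _ ((span {b}).mkQ ∘ₗ LinearMap.mulLeft A g) <| by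
    rw [span_le, Set.singleton_subset_iff]
    simpa only [SetLike.mem_coe, LinearMap.mem_ker, LinearMap.comp_apply, LinearMap.mulLeft_apply,
      Submodule.mkQ_apply, Submodule.Quotient.mk_eq_zero, mem_span_singleton] using h

@[simp] lemma mulQ_mk (g : A) {a b : A} (h : b ∣ g * a) (r : A) :
    mulQ g h (Ideal.Quotient.mk (span {a}) r) = Ideal.Quotient.mk (span {b}) (g * r) := rfl

lemma mulQ_injective (g : A) {a b : A} (h : b ∣ g * a) (hcancel : ∀ s, b ∣ g * s → a ∣ s) :
    Function.Injective (mulQ g h) := by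
  refine (injective_iff_map_eq_zero _).mpr fun x hx => ?_
  obtain ⟨s, rfl⟩ := Ideal.Quotient.mk_surjective x
  rw [mulQ_mk, Ideal.Quotient.eq_zero_iff_mem, mem_span_singleton] at hx
  rw [Ideal.Quotient.eq_zero_iff_mem, mem_span_singleton]
  exact hcancel s hx

lemma mulQ_one_surjective {a b : A} (h : b ∣ 1 * a) : Function.Surjective (mulQ 1 h) := by
  intro y
  obtain ⟨r, rfl⟩ := Ideal.Quotient.mk_surjective y
  exact ⟨Ideal.Quotient.mk _ r, by rw [mulQ_mk, one_mul]⟩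

variable (g : A) {a b c d : A}

noncomputable def mulProdNegMk (hb : b ∣ g * a) (hc : c ∣ a) :
    (A ⧸ span {a}) →ₗ[A] (A ⧸ span {b}) × (A ⧸ span {c}) :=
  (mulQ g hb).prod (-mulQ 1 (by rwa [one_mul]))

noncomputable def mkCoprodMul (hb : d ∣ b) (hc : d ∣ g * c) :
    (A ⧸ span {b}) × (A ⧸ span {c}) →ₗ[A] A ⧸ span {d} :=
  (mulQ 1 (by rwa [one_mul])).coprod (mulQ g hc)

lemma mulProdNegMk_mk (hb : b ∣ g * a) (hc : c ∣ a) (r : A) :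
    mulProdNegMk g hb hc (Ideal.Quotient.mk _ r) =
      (Ideal.Quotient.mk _ (g * r), -Ideal.Quotient.mk _ r) := by
  simp [mulProdNegMk]

lemma mkCoprodMul_mk (hb : d ∣ b) (hc : d ∣ g * c) (r r' : A) :
    mkCoprodMul g hb hc (Ideal.Quotient.mk _ r, Ideal.Quotient.mk _ r') =
      Ideal.Quotient.mk _ r + Ideal.Quotient.mk _ (g * r') := by
  simp [mkCoprodMul]

lemma mulProdNegMk_injective (hb : b ∣ g * a) (hc : c ∣ a)
    (hcancel : ∀ s, b ∣ g * s → a ∣ s) : Function.Injective (mulProdNegMk g hb hc) :=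
  fun _ _ h => mulQ_injective g hb hcancel (congrArg Prod.fst h)

lemma mkCoprodMul_surjective (hb : d ∣ b) (hc : d ∣ g * c) :
    Function.Surjective (mkCoprodMul g hb hc) := fun y => by
  obtain ⟨x, hx⟩ := mulQ_one_surjective (by rwa [one_mul] : d ∣ 1 * b) y
  exact ⟨(x, 0), by simpa [mkCoprodMul] using hx⟩

lemma range_mulProdNegMk_eq_ker_mkCoprodMul (hb : b ∣ g * a) (hc : c ∣ a) (hdb : d ∣ b)
    (hdc : d ∣ g * c) (hcgd : c * g ∣ d) :
    LinearMap.range (mulProdNegMk g hb hc) = LinearMap.ker (mkCoprodMul g hdb hdc) := by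
  apply le_antisymm
  · rintro _ ⟨x, rfl⟩
    obtain ⟨r, rfl⟩ := Ideal.Quotient.mk_surjective x
    rw [LinearMap.mem_ker, mulProdNegMk_mk, ← map_neg, mkCoprodMul_mk, ← map_add, mul_neg,
      add_neg_cancel, map_zero]
  · rintro ⟨x, y⟩ hxy
    obtain ⟨s, rfl⟩ := Ideal.Quotient.mk_surjective x
    obtain ⟨t, rfl⟩ := Ideal.Quotient.mk_surjective y
    rw [LinearMap.mem_ker, mkCoprodMul_mk, ← map_add, Ideal.Quotient.eq_zero_iff_mem,
      mem_span_singleton] at hxy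
    obtain ⟨w, hw⟩ := hcgd.trans hxy
    refine ⟨Ideal.Quotient.mk _ (c * w - t), ?_⟩
    rw [mulProdNegMk_mk, Prod.mk.injEq, ← map_neg]
    exact ⟨congrArg _ (by linear_combination -hw),
      Ideal.Quotient.eq.mpr (mem_span_singleton.mpr ⟨-w, by ring⟩)⟩

end QuotientMaps

lemma Ideal.Quotient.mk_dvd_mk_iff {S : Type*} [CommRing S] {F d : S} (hdF : d ∣ F) (s : S) :
    Ideal.Quotient.mk (span {F}) d ∣ Ideal.Quotient.mk (span {F}) s ↔ d ∣ s := by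
  refine ⟨fun ⟨r, hr⟩ => ?_, map_dvd _⟩
  obtain ⟨w, rfl⟩ := Ideal.Quotient.mk_surjective r
  rw [← map_mul, Ideal.Quotient.eq, mem_span_singleton] at hr
  exact (dvd_sub_left (dvd_mul_right d w)).mp (hdF.trans hr)

lemma Ideal.Quotient.dvd_of_mk_mul_dvd_mk_mul {S : Type*} [CommRing S] [IsDomain S]
    {F a g : S} (hF : a * g ∣ F) (hg : g ≠ 0) (s : S ⧸ span {F}) :
    Ideal.Quotient.mk _ (a * g) ∣ Ideal.Quotient.mk _ g * s → Ideal.Quotient.mk _ a ∣ s := by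
  obtain ⟨t, rfl⟩ := Ideal.Quotient.mk_surjective s
  rw [← map_mul, mk_dvd_mk_iff hF, mk_dvd_mk_iff (dvd_of_mul_right_dvd hF), mul_comm g]
  exact (mul_dvd_mul_iff_right hg).mp

theorem statement3_general (k : Type) [Field k]
    (n : ℕ) (f : ℕ → PSring k)
    (hirr : ∀ i < n, Irreducible (f i))
    (i : ℕ) (hi1 : 1 ≤ i) (hi2 : i < n) :
    ∃ (α : Smod k n f i →ₗ[Rring k n f] Smod k n f (i + 1) × Smod k n f (i - 1))
      (β : Smod k n f (i + 1) × Smod k n f (i - 1) →ₗ[Rring k n f]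
        Qmod k n f ((∏ j ∈ Finset.range (i - 1), f j) * f i)),
      (∀ r : Rring k n f,
        α (qmk k n f (∏ j ∈ Finset.range i, f j) r) =
          (qmk k n f (∏ j ∈ Finset.range (i + 1), f j) (toR k n f (f i) * r),
           - qmk k n f (∏ j ∈ Finset.range (i - 1), f j) r)) ∧
      (∀ r r' : Rring k n f,
        β (qmk k n f (∏ j ∈ Finset.range (i + 1), f j) r,
           qmk k n f (∏ j ∈ Finset.range (i - 1), f j) r') =
          qmk k n f ((∏ j ∈ Finset.range (i - 1), f j) * f i) r +
          qmk k n f ((∏ j ∈ Finset.range (i - 1), f j) * f i) (toR k n f (f i) * r')) ∧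
      Function.Injective α ∧ Function.Surjective β ∧
      LinearMap.range α = LinearMap.ker β := by
  have hPi : ∏ j ∈ Finset.range i, f j = (∏ j ∈ Finset.range (i - 1), f j) * f (i - 1) := by
    rw [← Finset.prod_range_succ, Nat.sub_add_cancel hi1]
  have hPi1 : ∏ j ∈ Finset.range (i + 1), f j = (∏ j ∈ Finset.range i, f j) * f i :=
    Finset.prod_range_succ _ _
  have hF : ∏ j ∈ Finset.range (i + 1), f j ∣ ∏ j ∈ Finset.range n, f j :=
    Finset.prod_dvd_prod_of_subset _ _ _ (Finset.range_subset_range.mpr hi2)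
  have hb : toR k n f (∏ j ∈ Finset.range (i + 1), f j) ∣
      toR k n f (f i) * toR k n f (∏ j ∈ Finset.range i, f j) := by
    rw [← map_mul, hPi1, mul_comm]
  have hc : toR k n f (∏ j ∈ Finset.range (i - 1), f j) ∣
      toR k n f (∏ j ∈ Finset.range i, f j) :=
    map_dvd _ (hPi ▸ dvd_mul_right _ _)
  have hdb : toR k n f ((∏ j ∈ Finset.range (i - 1), f j) * f i) ∣
      toR k n f (∏ j ∈ Finset.range (i + 1), f j) :=
    map_dvd _ ⟨f (i - 1), by rw [hPi1, hPi]; ring⟩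
  have hdc : toR k n f ((∏ j ∈ Finset.range (i - 1), f j) * f i) ∣
      toR k n f (f i) * toR k n f (∏ j ∈ Finset.range (i - 1), f j) := by
    rw [← map_mul, mul_comm]
  have hcgd : toR k n f (∏ j ∈ Finset.range (i - 1), f j) * toR k n f (f i) ∣
      toR k n f ((∏ j ∈ Finset.range (i - 1), f j) * f i) := by
    rw [map_mul]
  have := NoZeroDivisors.to_isDomain (PSring k)
  have hcancel := Ideal.Quotient.dvd_of_mk_mul_dvd_mk_mul (hPi1 ▸ hF) (hirr i hi2).ne_zero
  rw [← hPi1] at hcancel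
  exact ⟨mulProdNegMk _ hb hc, mkCoprodMul _ hdb hdc, mulProdNegMk_mk _ hb hc,
    mkCoprodMul_mk _ hdb hdc, mulProdNegMk_injective _ hb hc hcancel,
    mkCoprodMul_surjective _ hdb hdc, range_mulProdNegMk_eq_ker_mkCoprodMul _ hb hc hdb hdc hcgd⟩

theorem statement3 (k : Type) [Field k] [Infinite k]
    (n : ℕ) (hn : 1 ≤ n) (f : ℕ → PSring k)
    (hmem : ∀ i < n, f i ∈ mxy k)
    (hirr : ∀ i < n, Irreducible (f i))
    (hdist : ∀ i < n, ∀ j < n, i ≠ j →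
      (Ideal.span {f i} : Ideal (PSring k)) ≠ Ideal.span {f j})
    (i : ℕ) (hi1 : 1 ≤ i) (hi2 : i < n) :
    ∃ (α : Smod k n f i →ₗ[Rring k n f] Smod k n f (i + 1) × Smod k n f (i - 1))
      (β : Smod k n f (i + 1) × Smod k n f (i - 1) →ₗ[Rring k n f]
        Qmod k n f ((∏ j ∈ Finset.range (i - 1), f j) * f i)),
      (∀ r : Rring k n f,
        α (qmk k n f (∏ j ∈ Finset.range i, f j) r) =
          (qmk k n f (∏ j ∈ Finset.range (i + 1), f j) (toR k n f (f i) * r),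
           - qmk k n f (∏ j ∈ Finset.range (i - 1), f j) r)) ∧
      (∀ r r' : Rring k n f,
        β (qmk k n f (∏ j ∈ Finset.range (i + 1), f j) r,
           qmk k n f (∏ j ∈ Finset.range (i - 1), f j) r') =
          qmk k n f ((∏ j ∈ Finset.range (i - 1), f j) * f i) r +
          qmk k n f ((∏ j ∈ Finset.range (i - 1), f j) * f i) (toR k n f (f i) * r')) ∧
      Function.Injective α ∧ Function.Surjective β ∧
      LinearMap.range α = LinearMap.ker β :=
  statement3_general k n f hirr i hi1 hi2
end

section
/- For each 1 ≤ i < n the sequence of R-modules 0 → S/(f_1⋯f_{i−1}f_{i+1}) → S_{i+1} ⊕ S_{i−1} → S_i → 0 is a short exact sequence, where the first map sends u to (f_i·u, π(u)) (multiplication by f_i into S_{i+1} and the canonical projection onto S_{i−1}) and the second map sends (s,t) to −π(s) + f_i·t (minus the canonical projection from S_{i+1} plus multiplication by f_i from S_{i−1}). -/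
set_option synthInstance.maxHeartbeats 1000000
set_option maxHeartbeats 1000000

/-!
Write `π : S → R = S/(F)` and take `P = f₁⋯f_{i-1}`, `g = f_i`, `h = f_{i+1}`. For `a ∣ F` the
`R`-module `R/(π a)` is `S/(a)`, and there `π s` vanishes exactly when `a ∣ s`, so every
exactness question becomes a divisibility question in `S`. Injectivity of `u ↦ (g u, u)` on
`S/(P h)` is the cancellation of the nonzero `g` in `P g h ∣ g u`; and if `P g ∣ g t - s`, say
`g t - s = P g w`, then `(s, t)` is the image of `u = t - P w`, which is exactness in the middle.
-/

open Ideal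

def mulQuotSpan {R : Type*} [CommRing R] (c : R) {x y : R} (h : y ∣ c * x) :
    (R ⧸ span {x}) →ₗ[R] R ⧸ span {y} :=
  Submodule.mapQ _ _ (c • LinearMap.id) <|
    (Submodule.span_singleton_le_iff_mem _ _).2 <| Submodule.mem_comap.2 <|
      mem_span_singleton.2 h

section ShortExact

variable {S : Type*} [CommRing S] {F : S}

local notation "π" => Ideal.Quotient.mk (span (singleton F))

theorem mk_mk_eq_zero_iff {a : S} (ha : a ∣ F) {s : S} :
    Ideal.Quotient.mk (span {π a}) (π s) = 0 ↔ a ∣ s := by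
  rw [Ideal.Quotient.eq_zero_iff_mem, ← Set.image_singleton, ← map_span,
    mem_quotient_iff_mem (span_singleton_le_span_singleton.2 ha), mem_span_singleton]

theorem exists_mk_mk {a : S} (x : (S ⧸ span {F}) ⧸ span {π a}) :
    ∃ s : S, Ideal.Quotient.mk _ (π s) = x := by
  obtain ⟨r, rfl⟩ := Ideal.Quotient.mk_surjective x
  obtain ⟨s, rfl⟩ := Ideal.Quotient.mk_surjective r
  exact ⟨s, rfl⟩

variable {P g h A B : S}

theorem span_mk_le_span_mk_of_dvd {a b : S} (hab : a ∣ b) :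
    span {π b} ≤ span {π a} :=
  span_singleton_le_span_singleton.2 (map_dvd π hab)

variable (F) in
noncomputable def mulProjPair (hB : B = P * g) (hA : A = B * h) :
    (S ⧸ span {F}) ⧸ span {π (P * h)} →ₗ[S ⧸ span {F}]
      ((S ⧸ span {F}) ⧸ span {π A}) × ((S ⧸ span {F}) ⧸ span {π P}) :=
  (mulQuotSpan (π g) (by rw [← map_mul]; exact map_dvd π ⟨1, by rw [hA, hB]; ring⟩)).prod
    (Submodule.factor (span_mk_le_span_mk_of_dvd (dvd_mul_right P h)))

variable (F) in
noncomputable def projMulDiff (hB : B = P * g) (hA : A = B * h) :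
    ((S ⧸ span {F}) ⧸ span {π A}) × ((S ⧸ span {F}) ⧸ span {π P})
      →ₗ[S ⧸ span {F}] (S ⧸ span {F}) ⧸ span {π B} :=
  (-Submodule.factor (span_mk_le_span_mk_of_dvd ⟨h, hA⟩)).coprod
    (mulQuotSpan (π g) (by rw [← map_mul, hB, mul_comm]))

variable (hB : B = P * g) (hA : A = B * h)

theorem mulProjPair_mk (r : S ⧸ span {F}) :
    mulProjPair F hB hA (Ideal.Quotient.mk _ r) =
      (Ideal.Quotient.mk _ (π g * r), Ideal.Quotient.mk _ r) :=
  rfl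

theorem projMulDiff_mk (r r' : S ⧸ span {F}) :
    projMulDiff F hB hA (Ideal.Quotient.mk _ r, Ideal.Quotient.mk _ r') =
      -Ideal.Quotient.mk _ r + Ideal.Quotient.mk _ (π g * r') :=
  rfl

variable (F) in
theorem projMulDiff_surjective : Function.Surjective (projMulDiff F hB hA) := by
  intro y
  obtain ⟨r, rfl⟩ := Ideal.Quotient.mk_surjective y
  exact ⟨(Ideal.Quotient.mk _ (-r), 0), by simpa using projMulDiff_mk hB hA (-r) 0⟩

variable (hF : A ∣ F)
include hF

theorem mulProjPair_injective (hg : IsLeftRegular g) :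
    Function.Injective (mulProjPair F hB hA) := by
  subst hA hB
  refine (injective_iff_map_eq_zero _).2 fun x hx => ?_
  obtain ⟨u, rfl⟩ := exists_mk_mk x
  obtain ⟨c, hc⟩ : P * g * h ∣ g * u := by
    rw [← mk_mk_eq_zero_iff hF, map_mul]
    exact congrArg Prod.fst hx
  have hu : u = P * h * c := hg (show g * u = g * (P * h * c) by rw [hc]; ring)
  exact (mk_mk_eq_zero_iff (dvd_trans ⟨g, by ring⟩ hF)).2 ⟨c, hu⟩

theorem exact_mulProjPair_projMulDiff :
    Function.Exact (mulProjPair F hB hA) (projMulDiff F hB hA) := by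
  subst hA hB
  rintro ⟨x, y⟩
  obtain ⟨s, rfl⟩ := exists_mk_mk x
  obtain ⟨t, rfl⟩ := exists_mk_mk y
  constructor
  · intro hst
    obtain ⟨w, hw⟩ : P * g ∣ g * t - s := by
      rw [← mk_mk_eq_zero_iff (dvd_trans (dvd_mul_right _ h) hF), map_sub, map_mul, map_sub,
        sub_eq_neg_add]
      exact hst
    refine ⟨Ideal.Quotient.mk _ (π (t - P * w)), Prod.ext ?_ ?_⟩
    · rw [mulProjPair_mk, ← map_mul, show g * (t - P * w) = s by linear_combination hw]
    · rw [mulProjPair_mk, ← sub_eq_zero, ← map_sub, ← map_sub]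
      exact (mk_mk_eq_zero_iff (dvd_trans ⟨g * h, by ring⟩ hF)).2 ⟨-w, by ring⟩
  · rintro ⟨z, hz⟩
    rw [← hz]
    obtain ⟨r, rfl⟩ := Ideal.Quotient.mk_surjective z
    rw [mulProjPair_mk, projMulDiff_mk]
    exact neg_add_cancel _

end ShortExact

theorem statement4_general (k : Type) [Field k]
    (n : ℕ) (f : ℕ → PSring k)
    (hirr : ∀ i < n, Irreducible (f i))
    (i : ℕ) (hi1 : 1 ≤ i) (hi2 : i < n) :
    ∃ (α : Qmod k n f ((∏ j ∈ Finset.range (i - 1), f j) * f i) →ₗ[Rring k n f]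
        Smod k n f (i + 1) × Smod k n f (i - 1))
      (β : Smod k n f (i + 1) × Smod k n f (i - 1) →ₗ[Rring k n f] Smod k n f i),
      (∀ r : Rring k n f,
        α (qmk k n f ((∏ j ∈ Finset.range (i - 1), f j) * f i) r) =
          (qmk k n f (∏ j ∈ Finset.range (i + 1), f j) (toR k n f (f (i - 1)) * r),
           qmk k n f (∏ j ∈ Finset.range (i - 1), f j) r)) ∧
      (∀ r r' : Rring k n f,
        β (qmk k n f (∏ j ∈ Finset.range (i + 1), f j) r,
           qmk k n f (∏ j ∈ Finset.range (i - 1), f j) r') =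
          - qmk k n f (∏ j ∈ Finset.range i, f j) r +
          qmk k n f (∏ j ∈ Finset.range i, f j) (toR k n f (f (i - 1)) * r')) ∧
      Function.Injective α ∧ Function.Surjective β ∧
      LinearMap.range α = LinearMap.ker β := by
  obtain ⟨m, rfl⟩ : ∃ m, i = m + 1 := ⟨i - 1, by omega⟩
  have hB := Finset.prod_range_succ f m
  have hA := Finset.prod_range_succ f (m + 1)
  have hF : ∏ j ∈ Finset.range (m + 2), f j ∣ ∏ j ∈ Finset.range n, f j :=
    Finset.prod_dvd_prod_of_subset _ _ f (Finset.range_subset_range.2 hi2)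
  have : IsDomain (PSring k) := NoZeroDivisors.to_isDomain _
  have hg : IsLeftRegular (f m) := (IsRegular.of_ne_zero (hirr m (by omega)).ne_zero).left
  exact ⟨mulProjPair _ hB hA, projMulDiff _ hB hA, fun _ => rfl, fun _ _ => rfl,
    mulProjPair_injective hB hA hF hg, projMulDiff_surjective _ hB hA,
    (exact_mulProjPair_projMulDiff hB hA hF).linearMap_ker_eq.symm⟩

theorem statement4 (k : Type) [Field k] [Infinite k]
    (n : ℕ) (hn : 1 ≤ n) (f : ℕ → PSring k)
    (hmem : ∀ i < n, f i ∈ mxy k)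
    (hirr : ∀ i < n, Irreducible (f i))
    (hdist : ∀ i < n, ∀ j < n, i ≠ j →
      (Ideal.span {f i} : Ideal (PSring k)) ≠ Ideal.span {f j})
    (i : ℕ) (hi1 : 1 ≤ i) (hi2 : i < n) :
    ∃ (α : Qmod k n f ((∏ j ∈ Finset.range (i - 1), f j) * f i) →ₗ[Rring k n f]
        Smod k n f (i + 1) × Smod k n f (i - 1))
      (β : Smod k n f (i + 1) × Smod k n f (i - 1) →ₗ[Rring k n f] Smod k n f i),
      (∀ r : Rring k n f,
        α (qmk k n f ((∏ j ∈ Finset.range (i - 1), f j) * f i) r) =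
          (qmk k n f (∏ j ∈ Finset.range (i + 1), f j) (toR k n f (f (i - 1)) * r),
           qmk k n f (∏ j ∈ Finset.range (i - 1), f j) r)) ∧
      (∀ r r' : Rring k n f,
        β (qmk k n f (∏ j ∈ Finset.range (i + 1), f j) r,
           qmk k n f (∏ j ∈ Finset.range (i - 1), f j) r') =
          - qmk k n f (∏ j ∈ Finset.range i, f j) r +
          qmk k n f (∏ j ∈ Finset.range i, f j) (toR k n f (f (i - 1)) * r')) ∧
      Function.Injective α ∧ Function.Surjective β ∧
      LinearMap.range α = LinearMap.ker β :=
  statement4_general k n f hirr i hi1 hi2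
end

section
/- Suppose f_{n+1} ∈ m satisfies (f_n, f_{n+1}) = m and f_{n+1} is relatively prime to f = f_1⋯f_n (every common divisor is a unit). Then the sequence 0 → S_{n−1} → S_n ⊕ S_{n−1} → S_n, where the first map sends t to (f_n·t, −f_{n+1}·t) and the second map sends (s,t) to f_{n+1}·s + f_n·t, is exact (the first map is injective and its image equals the kernel of the second map); moreover the second map is right almost split in add(⊕_{i=1}^n S_i): every R-linear map h : S_j → S_n (for any 1 ≤ j ≤ n) that is not a split epimorphism factors through it. -/
set_option synthInstance.maxHeartbeats 1000000
set_option maxHeartbeats 1000000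

/-!
Every `R`-linear map `S/(a) → S/(b)` is multiplication by some `c`, so everything reduces to
divisibility in the domain `S`. Write `f = P·Q` with `Q = fₙ` and `g = fₙ₊₁`. Exactness of
`S/(P) → S/(PQ) × S/(P) → S/(PQ)` only needs `g` to be a nonzerodivisor modulo `Q`; this holds
because `(Q, g) = 𝔪` contains the regular sequence `x, y`. A map `Sⱼ → Sₙ`, `j < n`, is
multiplication by a multiple of `fⱼ₊₁⋯fₙ`, hence by `Q·a` with `P ∣ a·f₁⋯fⱼ`, and factors through
the second summand. A map `Sₙ → Sₙ` that is not a split epimorphism is multiplication by a nonunit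
`c ∈ 𝔪 = (Q, g)`, say `c = aQ + bg`, and factors as `(b, a)`.
-/

open MvPowerSeries

section Divisibility

variable {A : Type*} [CommRing A]

theorem dvd_mul_of_mem_span_pair {Q g s x : A} (hx : x ∈ Ideal.span {Q, g}) (h : Q ∣ g * s) :
    Q ∣ x * s := by
  obtain ⟨u, v, rfl⟩ := Ideal.mem_span_pair.mp hx
  rw [show (u * Q + v * g) * s = Q * (u * s) + v * (g * s) by ring]
  exact dvd_add (dvd_mul_right _ _) (h.mul_left v)

/-- From `p s = Q u` and `b s = Q v` we get `b u = p v`, so `u = p z` and `s = Q z`. -/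
theorem dvd_of_dvd_mul_of_dvd_mul [IsDomain A] {p b Q s : A} (hp : Prime p) (hpb : ¬ p ∣ b)
    (hQ : Q ≠ 0) (hps : Q ∣ p * s) (hbs : Q ∣ b * s) : Q ∣ s := by
  obtain ⟨u, hu⟩ := hps
  obtain ⟨v, hv⟩ := hbs
  have hbu : b * u = p * v := mul_left_cancel₀ hQ <| by
    linear_combination p * hv - b * hu
  obtain ⟨z, rfl⟩ := (hp.dvd_or_dvd ⟨v, hbu⟩).resolve_left hpb
  exact ⟨z, mul_left_cancel₀ hp.ne_zero (by linear_combination hu)⟩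

end Divisibility

namespace MvPowerSeries

variable {σ R : Type*} [CommRing R]

instance [IsDomain R] : IsDomain (MvPowerSeries σ R) :=
  NoZeroDivisors.to_isDomain _

theorem X_dvd_iff_killCompl_eq_zero (s : σ) (φ : MvPowerSeries σ R) :
    X s ∣ φ ↔ killCompl (Function.Embedding.subtype (· ≠ s)) φ = 0 := by
  classical
  constructor
  · rintro ⟨ψ, rfl⟩
    rw [map_mul, killCompl_X_eq_zero (by simp), zero_mul]
  · refine fun h => X_dvd_iff.mpr fun m hm => ?_
    have hm' : ∀ t ∈ m.support, t ≠ s := fun t ht hts => Finsupp.mem_support_iff.mp ht (hts ▸ hm)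
    rw [← Finsupp.extendDomain_subtypeDomain m hm', Finsupp.extendDomain_eq_embDomain_subtype,
      ← coeff_killCompl, h, map_zero]

theorem prime_X [IsDomain R] (s : σ) : Prime (X s : MvPowerSeries σ R) := by
  refine ⟨fun h => ?_, fun h => ?_, fun a b hab => ?_⟩
  · simpa using congrArg (coeff (Finsupp.single s 1)) h
  · simpa using isUnit_iff_constantCoeff.mp h
  · simp only [X_dvd_iff_killCompl_eq_zero, map_mul] at hab ⊢
    exact mul_eq_zero.mp hab

theorem X_zero_not_dvd_X_one [Nontrivial R] : ¬ (X 0 : MvPowerSeries (Fin 2) R) ∣ X 1 := by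
  rw [X_dvd_iff]
  push Not
  exact ⟨Finsupp.single 1 1, by simp, by simp [coeff_X]⟩

theorem mem_span_X_zero_X_one {g : MvPowerSeries (Fin 2) R} (hg : constantCoeff g = 0) :
    g ∈ Ideal.span {X 0, X 1} := by
  classical
  let g₁ : MvPowerSeries (Fin 2) R := fun m => if m 0 = 0 then coeff m g else 0
  have hg₁ (m : Fin 2 →₀ ℕ) : coeff m g₁ = if m 0 = 0 then coeff m g else 0 := rfl
  have hX₀ : X 0 ∣ g - g₁ := X_dvd_iff.mpr fun m hm => by
    rw [map_sub, hg₁, if_pos hm, sub_self]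
  have hX₁ : X 1 ∣ g₁ := X_dvd_iff.mpr fun m hm₁ => by
    rw [hg₁]
    split_ifs with hm₀
    · obtain rfl : m = 0 := by ext i; fin_cases i <;> assumption
      rwa [coeff_zero_eq_constantCoeff_apply]
    · rfl
  obtain ⟨u, hu⟩ := hX₀
  obtain ⟨v, hv⟩ := hX₁
  exact Ideal.mem_span_pair.mpr ⟨u, v, by rw [mul_comm u, mul_comm v, ← hu, ← hv]; ring⟩

theorem dvd_of_dvd_mul_of_span_eq_span_X [IsDomain R] {Q g s : MvPowerSeries (Fin 2) R}
    (hQ : Q ≠ 0) (hmax : Ideal.span {Q, g} = Ideal.span {X 0, X 1}) (h : Q ∣ g * s) : Q ∣ s :=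
  dvd_of_dvd_mul_of_dvd_mul (prime_X 0) X_zero_not_dvd_X_one hQ
    (dvd_mul_of_mem_span_pair (hmax ▸ Ideal.subset_span (by simp)) h)
    (dvd_mul_of_mem_span_pair (hmax ▸ Ideal.subset_span (by simp)) h)

theorem mem_span_X_of_not_isUnit {K : Type*} [Field K] {c : MvPowerSeries (Fin 2) K}
    (hc : ¬ IsUnit c) : c ∈ Ideal.span {X 0, X 1} :=
  mem_span_X_zero_X_one <| by
    rwa [isUnit_iff_constantCoeff, isUnit_iff_ne_zero, not_not] at hc

end MvPowerSeries

section QuotientMul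

variable {A : Type*} [CommRing A]

def quotMul (a b c : A) (h : b ∣ c * a) : (A ⧸ Ideal.span {a}) →ₗ[A] A ⧸ Ideal.span {b} :=
  Submodule.mapQ _ _ (LinearMap.mulLeft A c) <|
    (Submodule.span_singleton_le_iff_mem _ _).mpr (Ideal.mem_span_singleton.mpr h)

variable {a b c : A}

@[simp]
theorem quotMul_mk (h : b ∣ c * a) (x : A) :
    quotMul a b c h (Submodule.Quotient.mk x) = Submodule.Quotient.mk (c * x) :=
  rfl

theorem quotMul_ext {f g : (A ⧸ Ideal.span {a}) →ₗ[A] A ⧸ Ideal.span {b}}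
    (h : ∀ x, f (Submodule.Quotient.mk x) = g (Submodule.Quotient.mk x)) : f = g :=
  Submodule.linearMap_qext _ (LinearMap.ext h)

theorem exists_eq_quotMul (f : (A ⧸ Ideal.span {a}) →ₗ[A] A ⧸ Ideal.span {b}) :
    ∃ c h, f = quotMul a b c h := by
  obtain ⟨c, hc⟩ := Submodule.Quotient.mk_surjective _ (f (Submodule.Quotient.mk 1))
  have hf (x : A) : f (Submodule.Quotient.mk x) = Submodule.Quotient.mk (c * x) := by
    rw [← mul_one x, ← smul_eq_mul, Submodule.Quotient.mk_smul, map_smul, ← hc,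
      ← Submodule.Quotient.mk_smul, smul_eq_mul, smul_eq_mul, mul_one, mul_comm]
  refine ⟨c, ?_, quotMul_ext fun x => by rw [hf, quotMul_mk]⟩
  rw [← Ideal.mem_span_singleton, ← Submodule.Quotient.mk_eq_zero, ← hf,
    (Submodule.Quotient.mk_eq_zero _).mpr (Ideal.mem_span_singleton_self a), map_zero]

end QuotientMul

section PairMap

variable {S : Type*} [CommRing S] {F P Q D : S}

local notation "π" => Ideal.Quotient.mk (Ideal.span (singleton F))
local notation "A" => S ⧸ Ideal.span (singleton F)
local notation "M[" D "]" => A ⧸ Ideal.span (singleton (π D))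

theorem mk_mk_eq_zero_iff_s6 (hD : D ∣ F) (s : S) :
    (Submodule.Quotient.mk (π s) : M[D]) = 0 ↔ D ∣ s := by
  rw [Submodule.Quotient.mk_eq_zero, ← Set.image_singleton, ← Ideal.map_span,
    Ideal.mem_quotient_iff_mem (Ideal.span_singleton_le_span_singleton.mpr hD),
    Ideal.mem_span_singleton]

theorem mk_mk_surjective (D : S) :
    Function.Surjective fun s : S ↦ (Submodule.Quotient.mk (π s) : M[D]) :=
  (Submodule.Quotient.mk_surjective _).comp Ideal.Quotient.mk_surjective

theorem mk_dvd_mk_mul_mk (hF : F = P * Q) : π F ∣ π Q * π P := by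
  rw [← map_mul, hF, mul_comm]

def pairSyzygy (hF : F = P * Q) (g : S) : M[P] →ₗ[A] M[F] × M[P] :=
  (quotMul _ _ (π Q) (mk_dvd_mk_mul_mk hF)).prod (-quotMul _ _ (π g) (dvd_mul_left _ _))

def pairMap (hF : F = P * Q) (g : S) : M[F] × M[P] →ₗ[A] M[F] :=
  (quotMul _ _ (π g) (dvd_mul_left _ _)).coprod (quotMul _ _ (π Q) (mk_dvd_mk_mul_mk hF))

@[simp]
theorem pairSyzygy_mk (hF : F = P * Q) (g : S) (x : A) :
    pairSyzygy hF g (Submodule.Quotient.mk x) =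
      (Submodule.Quotient.mk (π Q * x), -Submodule.Quotient.mk (π g * x)) :=
  rfl

@[simp]
theorem pairMap_mk (hF : F = P * Q) (g : S) (x y : A) :
    pairMap hF g (Submodule.Quotient.mk x, Submodule.Quotient.mk y) =
      Submodule.Quotient.mk (π g * x) + Submodule.Quotient.mk (π Q * y) :=
  rfl

theorem exists_pairMap_comp_eq_quotMul (hF : F = P * Q) (g : S) {a b c : S}
    (hc : c = g * b + Q * a) (hb : F ∣ b * D) (ha : P ∣ a * D) (hcD : π F ∣ π c * π D) :
    ∃ φ : M[D] →ₗ[A] M[F] × M[P], pairMap hF g ∘ₗ φ = quotMul (π D) (π F) (π c) hcD := by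
  refine ⟨(quotMul _ _ (π b) (map_mul π b D ▸ map_dvd π hb)).prod
    (quotMul _ _ (π a) (map_mul π a D ▸ map_dvd π ha)), quotMul_ext fun x => ?_⟩
  simp only [LinearMap.comp_apply, LinearMap.prod_apply, Function.prod, quotMul_mk, pairMap_mk,
    ← Submodule.Quotient.mk_add, hc, map_add, map_mul, add_mul, mul_assoc]

theorem exists_pairMap_comp_eq_of_not_exists_comp_eq_id (hF : F = P * Q) {g : S}
    (hm : ∀ c, ¬ IsUnit c → c ∈ Ideal.span {Q, g}) (h : M[F] →ₗ[A] M[F])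
    (hns : ¬ ∃ σ : M[F] →ₗ[A] M[F], h ∘ₗ σ = LinearMap.id) :
    ∃ φ : M[F] →ₗ[A] M[F] × M[P], pairMap hF g ∘ₗ φ = h := by
  obtain ⟨c', hc', rfl⟩ := exists_eq_quotMul h
  obtain ⟨c, rfl⟩ := Ideal.Quotient.mk_surjective c'
  have hc : ¬ IsUnit c := by
    rintro hcu
    obtain ⟨u, hu⟩ := hcu.map π
    refine hns ⟨quotMul _ _ ↑u⁻¹ (dvd_mul_left _ _), quotMul_ext fun x => ?_⟩
    rw [LinearMap.comp_apply, quotMul_mk, quotMul_mk, ← hu, ← mul_assoc, Units.mul_inv, one_mul,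
      LinearMap.id_apply]
  obtain ⟨a, b, hab⟩ := Ideal.mem_span_pair.mp (hm c hc)
  exact exists_pairMap_comp_eq_quotMul hF g (a := a) (b := b) (by rw [← hab]; ring)
    (dvd_mul_left _ _) ⟨a * Q, by rw [hF]; ring⟩ hc'

variable [IsDomain S]

theorem pairSyzygy_injective (hF : F = P * Q) (hQ : Q ≠ 0) (g : S) :
    Function.Injective (pairSyzygy hF g) := by
  refine (injective_iff_map_eq_zero _).mpr fun x hx => ?_
  obtain ⟨t, rfl⟩ := mk_mk_surjective P x
  have hQt := congrArg Prod.fst hx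
  rw [pairSyzygy_mk, ← map_mul, Prod.fst_zero, mk_mk_eq_zero_iff_s6 dvd_rfl, hF, mul_comm Q,
    mul_dvd_mul_iff_right hQ] at hQt
  exact (mk_mk_eq_zero_iff_s6 (hF ▸ dvd_mul_right P Q) t).mpr hQt

theorem range_pairSyzygy_eq_ker_pairMap (hF : F = P * Q) (hQ : Q ≠ 0) {g : S}
    (hg : ∀ s, Q ∣ g * s → Q ∣ s) :
    LinearMap.range (pairSyzygy hF g) = LinearMap.ker (pairMap hF g) := by
  have hPF : P ∣ F := hF ▸ dvd_mul_right P Q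
  apply le_antisymm
  · rintro _ ⟨x, rfl⟩
    obtain ⟨t, rfl⟩ := mk_mk_surjective P x
    rw [LinearMap.mem_ker, pairSyzygy_mk, ← Submodule.Quotient.mk_neg, pairMap_mk,
      ← Submodule.Quotient.mk_add, mul_neg, mul_left_comm, add_neg_cancel,
      Submodule.Quotient.mk_zero]
  · rintro ⟨x, y⟩ hxy
    obtain ⟨s, rfl⟩ := mk_mk_surjective F x
    obtain ⟨t, rfl⟩ := mk_mk_surjective P y
    rw [LinearMap.mem_ker, pairMap_mk, ← Submodule.Quotient.mk_add, ← map_mul, ← map_mul,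
      ← map_add, mk_mk_eq_zero_iff_s6 dvd_rfl] at hxy
    obtain ⟨s', rfl⟩ : Q ∣ s :=
      hg s ((dvd_add_left (dvd_mul_right Q t)).mp ((hF ▸ dvd_mul_left Q P).trans hxy))
    have hP : P ∣ t + g * s' := by
      rwa [hF, show g * (Q * s') + Q * t = (t + g * s') * Q by ring,
        mul_dvd_mul_iff_right hQ] at hxy
    refine ⟨Submodule.Quotient.mk (π s'), Prod.ext ?_ ?_⟩
    · simp only [pairSyzygy_mk, map_mul]
    · dsimp only
      rw [pairSyzygy_mk, eq_comm, ← sub_eq_zero, sub_neg_eq_add, ← Submodule.Quotient.mk_add,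
        ← map_mul, ← map_add, mk_mk_eq_zero_iff_s6 hPF]
      exact hP

theorem exists_pairMap_comp_eq_of_dvd (hF : F = P * Q) (hP : P ≠ 0) (g : S) (hD : D ∣ P)
    (h : M[D] →ₗ[A] M[F]) : ∃ φ : M[D] →ₗ[A] M[F] × M[P], pairMap hF g ∘ₗ φ = h := by
  obtain ⟨c', hc', rfl⟩ := exists_eq_quotMul h
  obtain ⟨c, rfl⟩ := Ideal.Quotient.mk_surjective c'
  have hFc : F ∣ c * D := by
    rwa [Ideal.Quotient.mk_singleton_self, zero_dvd_iff, ← map_mul,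
      Ideal.Quotient.eq_zero_iff_dvd] at hc'
  obtain ⟨E, rfl⟩ := hD
  rw [hF, mul_comm c, mul_assoc, mul_dvd_mul_iff_left (left_ne_zero_of_mul hP)] at hFc
  obtain ⟨w, rfl⟩ := hFc
  exact exists_pairMap_comp_eq_quotMul hF g (a := E * w) (b := 0) (by ring) (by simp)
    ⟨w, by ring⟩ hc'

end PairMap

theorem statement6_general (k : Type) [Field k]
    (n : ℕ) (hn : 1 ≤ n) (f : ℕ → PSring k)
    (hirr : ∀ i < n, Irreducible (f i))
    (f' : PSring k)
    (hmax : (Ideal.span {f (n - 1), f'} : Ideal (PSring k)) = mxy k) :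
    ∃ (α : Smod k n f (n - 1) →ₗ[Rring k n f] Smod k n f n × Smod k n f (n - 1))
      (β : Smod k n f n × Smod k n f (n - 1) →ₗ[Rring k n f] Smod k n f n),
      (∀ r : Rring k n f,
        α (qmk k n f (∏ j ∈ Finset.range (n - 1), f j) r) =
          (qmk k n f (∏ j ∈ Finset.range n, f j) (toR k n f (f (n - 1)) * r),
           - qmk k n f (∏ j ∈ Finset.range (n - 1), f j) (toR k n f f' * r))) ∧
      (∀ r r' : Rring k n f,
        β (qmk k n f (∏ j ∈ Finset.range n, f j) r,
           qmk k n f (∏ j ∈ Finset.range (n - 1), f j) r') =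
          qmk k n f (∏ j ∈ Finset.range n, f j) (toR k n f f' * r) +
          qmk k n f (∏ j ∈ Finset.range n, f j) (toR k n f (f (n - 1)) * r')) ∧
      Function.Injective α ∧ LinearMap.range α = LinearMap.ker β ∧
      (∀ jdx : ℕ, 1 ≤ jdx → jdx ≤ n →
        ∀ h : Smod k n f jdx →ₗ[Rring k n f] Smod k n f n,
          (¬ ∃ σ : Smod k n f n →ₗ[Rring k n f] Smod k n f jdx,
              h ∘ₗ σ = LinearMap.id) →
          ∃ g : Smod k n f jdx →ₗ[Rring k n f] Smod k n f n × Smod k n f (n - 1),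
            β ∘ₗ g = h) := by
  obtain ⟨m, rfl⟩ : ∃ m, n = m + 1 := ⟨n - 1, by omega⟩
  simp only [Nat.add_sub_cancel] at hmax ⊢
  have hF := Finset.prod_range_succ f m
  have hP : ∏ j ∈ Finset.range m, f j ≠ 0 := Finset.prod_ne_zero_iff.mpr fun i hi =>
    (hirr i ((Finset.mem_range.mp hi).trans m.lt_succ_self)).ne_zero
  have hQ : f m ≠ 0 := (hirr m m.lt_succ_self).ne_zero
  refine ⟨pairSyzygy hF f', pairMap hF f', fun r => rfl, fun r r' => rfl,
    pairSyzygy_injective hF hQ f',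
    range_pairSyzygy_eq_ker_pairMap hF hQ fun s => dvd_of_dvd_mul_of_span_eq_span_X hQ hmax,
    fun j _ hj h hns => ?_⟩
  rcases hj.lt_or_eq with hj | rfl
  · exact exists_pairMap_comp_eq_of_dvd hF hP f'
      (Finset.prod_dvd_prod_of_subset _ _ _ (Finset.range_subset_range.mpr (by omega))) h
  · exact exists_pairMap_comp_eq_of_not_exists_comp_eq_id hF
      (fun c hc => hmax ▸ mem_span_X_of_not_isUnit hc) h hns

theorem statement6 (k : Type) [Field k] [Infinite k]
    (n : ℕ) (hn : 1 ≤ n) (f : ℕ → PSring k)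
    (hmem : ∀ i < n, f i ∈ mxy k)
    (hirr : ∀ i < n, Irreducible (f i))
    (hdist : ∀ i < n, ∀ j < n, i ≠ j →
      (Ideal.span {f i} : Ideal (PSring k)) ≠ Ideal.span {f j})
    (f' : PSring k) (hf'm : f' ∈ mxy k)
    (hmax : (Ideal.span {f (n - 1), f'} : Ideal (PSring k)) = mxy k)
    (hcop : ∀ d : PSring k, d ∣ f' → d ∣ (∏ j ∈ Finset.range n, f j) → IsUnit d) :
    ∃ (α : Smod k n f (n - 1) →ₗ[Rring k n f] Smod k n f n × Smod k n f (n - 1))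
      (β : Smod k n f n × Smod k n f (n - 1) →ₗ[Rring k n f] Smod k n f n),
      (∀ r : Rring k n f,
        α (qmk k n f (∏ j ∈ Finset.range (n - 1), f j) r) =
          (qmk k n f (∏ j ∈ Finset.range n, f j) (toR k n f (f (n - 1)) * r),
           - qmk k n f (∏ j ∈ Finset.range (n - 1), f j) (toR k n f f' * r))) ∧
      (∀ r r' : Rring k n f,
        β (qmk k n f (∏ j ∈ Finset.range n, f j) r,
           qmk k n f (∏ j ∈ Finset.range (n - 1), f j) r') =
          qmk k n f (∏ j ∈ Finset.range n, f j) (toR k n f f' * r) +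
          qmk k n f (∏ j ∈ Finset.range n, f j) (toR k n f (f (n - 1)) * r')) ∧
      Function.Injective α ∧ LinearMap.range α = LinearMap.ker β ∧
      (∀ jdx : ℕ, 1 ≤ jdx → jdx ≤ n →
        ∀ h : Smod k n f jdx →ₗ[Rring k n f] Smod k n f n,
          (¬ ∃ σ : Smod k n f n →ₗ[Rring k n f] Smod k n f jdx,
              h ∘ₗ σ = LinearMap.id) →
          ∃ g : Smod k n f jdx →ₗ[Rring k n f] Smod k n f n × Smod k n f (n - 1),
            β ∘ₗ g = h) :=
  statement6_general k n hn f hirr f' hmax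
end
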